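/- arXiv:2602.01746 — 3 statements merged into one kernel-verified Lean document; each statement's English description precedes it below -/
import Mathlib

section
/- Let f : ℝ^d → ℝ be differentiable with L-Lipschitz gradient, where L ≥ 0. Let η > 0, T be a positive integer, G ≥ 0, ε ≥ 0, and suppose η·L·T ≤ 1/2. Let (θ_t) and (θ*_t) be sequences in ℝ^d with θ_0 = θ*_0, θ*_{t+1} = θ*_t − η·∇f(θ*_t), and θ_{t+1} = θ_t − η·(∇f(θ_t) + d_t + ξ_t), where the drift vectors satisfy ‖d_t‖₂ ≤ 2G and the noise vectors satisfy ‖ξ_t‖₂ ≤ ε for all t. Then for every t ≤ T, ‖θ_t − θ*_t‖₂ ≤ 2·η·T·(2G + ε). -/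
/-! The error `e t = θ t - θs t` satisfies `‖e (t+1)‖ ≤ (1 + ηL) ‖e t‖ + η (2G + ε)`, since one
step of either trajectory moves the error by at most `ηL ‖e t‖` through the gradients plus the
perturbation. As long as `ηLt ≤ 1/2`, the amplification `ηL ‖e t‖` of the linear bound
`‖e t‖ ≤ 2ηt(2G + ε)` costs at most half a step, so that bound propagates by induction. -/

theorem norm_perturbed_step_sub_step_le {E : Type*} [NormedAddCommGroup E] [NormedSpace ℝ E]
    (g : E → E) {L : ℝ} (hg : ∀ x y, ‖g x - g y‖ ≤ L * ‖x - y‖) {η : ℝ} (hη : 0 ≤ η)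
    (x y u : E) :
    ‖(x - η • (g x + u)) - (y - η • g y)‖ ≤ (1 + η * L) * ‖x - y‖ + η * ‖u‖ := by
  have hsplit : (x - η • (g x + u)) - (y - η • g y) = ((x - y) - η • (g x - g y)) - η • u := by
    module
  calc ‖(x - η • (g x + u)) - (y - η • g y)‖
      ≤ ‖x - y‖ + ‖η • (g x - g y)‖ + ‖η • u‖ := by
        rw [hsplit]
        exact (norm_sub_le _ _).trans (add_le_add_left (norm_sub_le _ _) _)
    _ ≤ ‖x - y‖ + η * (L * ‖x - y‖) + η * ‖u‖ := by
        rw [norm_smul, norm_smul, Real.norm_of_nonneg hη]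
        gcongr
        exact hg x y
    _ = (1 + η * L) * ‖x - y‖ + η * ‖u‖ := by ring

theorem le_two_mul_mul_of_le_one_add_mul_add {a : ℕ → ℝ} {η L M : ℝ} {T : ℕ}
    (hη : 0 ≤ η) (hL : 0 ≤ L) (hM : 0 ≤ M) (hstep : η * L * T ≤ 1 / 2) (h0 : a 0 = 0)
    (hrec : ∀ t, a (t + 1) ≤ (1 + η * L) * a t + η * M) :
    ∀ t ≤ T, a t ≤ 2 * η * t * M := by
  intro t
  induction t with
  | zero => simp [h0]
  | succ t ih =>
    intro ht
    have hηLt : η * L * t ≤ 1 / 2 :=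
      le_trans (by gcongr; exact_mod_cast (Nat.le_succ t).trans ht) hstep
    have hprev := ih (Nat.le_of_succ_le ht)
    calc a (t + 1) ≤ (1 + η * L) * (2 * η * t * M) + η * M :=
          (hrec t).trans (by gcongr)
      _ = 2 * η * t * M + η * M * (1 + 2 * (η * L * t)) := by ring
      _ ≤ 2 * η * t * M + η * M * 2 := by gcongr; linarith
      _ = 2 * η * ↑(t + 1) * M := by push_cast; ring

theorem sgd_local_containment_general {d : ℕ} (f : EuclideanSpace ℝ (Fin d) → ℝ)
    (L : ℝ) (hL : 0 ≤ L)
    (hlip : ∀ x y, ‖gradient f x - gradient f y‖ ≤ L * ‖x - y‖)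
    (η : ℝ) (hη : 0 < η) (T : ℕ)
    (G ε : ℝ) (hG : 0 ≤ G) (hε : 0 ≤ ε)
    (hstep : η * L * T ≤ 1 / 2)
    (θ θs dv ξ : ℕ → EuclideanSpace ℝ (Fin d))
    (h0 : θ 0 = θs 0)
    (hrefs : ∀ t, θs (t + 1) = θs t - η • gradient f (θs t))
    (hcl : ∀ t, θ (t + 1) = θ t - η • (gradient f (θ t) + dv t + ξ t))
    (hd : ∀ t, ‖dv t‖ ≤ 2 * G) (hxi : ∀ t, ‖ξ t‖ ≤ ε) :
    ∀ t ≤ T, ‖θ t - θs t‖ ≤ 2 * η * T * (2 * G + ε) := by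
  have hM : 0 ≤ 2 * G + ε := by linarith
  have herror_step : ∀ t, ‖θ (t + 1) - θs (t + 1)‖
      ≤ (1 + η * L) * ‖θ t - θs t‖ + η * (2 * G + ε) := by
    intro t
    rw [hcl, hrefs, add_assoc]
    refine (norm_perturbed_step_sub_step_le _ hlip hη.le _ _ _).trans ?_
    gcongr
    exact (norm_add_le _ _).trans (add_le_add (hd t) (hxi t))
  intro t ht
  calc ‖θ t - θs t‖ ≤ 2 * η * t * (2 * G + ε) :=
        le_two_mul_mul_of_le_one_add_mul_add (a := fun t ↦ ‖θ t - θs t‖) hη.le hL hM hstep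
          (by rw [h0, sub_self, norm_zero]) herror_step t ht
    _ ≤ 2 * η * T * (2 * G + ε) := by gcongr

/-- Local-containment radius for SGD with drift and noise,
compared to a centralized gradient-descent reference trajectory. -/
theorem sgd_local_containment {d : ℕ} (f : EuclideanSpace ℝ (Fin d) → ℝ)
    (L : ℝ) (hL : 0 ≤ L) (hf : Differentiable ℝ f)
    (hlip : ∀ x y, ‖gradient f x - gradient f y‖ ≤ L * ‖x - y‖)
    (η : ℝ) (hη : 0 < η) (T : ℕ) (hT : 0 < T)
    (G ε : ℝ) (hG : 0 ≤ G) (hε : 0 ≤ ε)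
    (hstep : η * L * T ≤ 1 / 2)
    (θ θs dv ξ : ℕ → EuclideanSpace ℝ (Fin d))
    (h0 : θ 0 = θs 0)
    (hrefs : ∀ t, θs (t + 1) = θs t - η • gradient f (θs t))
    (hcl : ∀ t, θ (t + 1) = θ t - η • (gradient f (θ t) + dv t + ξ t))
    (hd : ∀ t, ‖dv t‖ ≤ 2 * G) (hxi : ∀ t, ‖ξ t‖ ≤ ε) :
    ∀ t ≤ T, ‖θ t - θs t‖ ≤ 2 * η * T * (2 * G + ε) :=
  sgd_local_containment_general f L hL hlip η hη T G ε hG hε hstep θ θs dv ξ h0 hrefs hcl hd hxi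
end

section
/- Let f : ℝ^d → ℝ be differentiable with L-Lipschitz gradient, where L ≥ 0. Let η > 0, β ∈ [0,1), B_m ≥ 0, G ≥ 0, ε ≥ 0, and let T be a positive integer with η·L·T ≤ 1/2. Let (θ_t, m_t) and (θ*_t, m*_t) be sequences in ℝ^d satisfying the momentum recursions m_{t+1} = β·m_t + (1 − β)·(∇f(θ_t) + d_t + ξ_t), θ_{t+1} = θ_t − η·m_{t+1}, and m*_{t+1} = β·m*_t + (1 − β)·∇f(θ*_t), θ*_{t+1} = θ*_t − η·m*_{t+1}, with θ_0 = θ*_0, ‖m_0 − m*_0‖₂ ≤ B_m, ‖d_t‖₂ ≤ 2G, and ‖ξ_t‖₂ ≤ ε for all t. Then for every t ≤ T, ‖θ_t − θ*_t‖₂ ≤ 2η·B_m/(1 − β) + 2η·T·(2G + ε). -/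
/-!
Write `u t = ‖m t - ms t‖` and `e t = ‖θ t - θs t‖`. The momentum gaps obey
`u (t+1) ≤ β u t + (1 - β) (L e t + D)` with `D = 2G + ε`, and the position gaps obey
`e (t+1) ≤ e t + η u (t+1)`. As long as `e ≤ R`, the first recursion keeps
`u t ≤ β ^ t Bm + (L R + D)`, and summing the second one gives
`e t ≤ η Bm / (1 - β) + η T (L R + D)`. The radius `R = 2 η Bm / (1 - β) + 2 η T D` is
self-consistent, because `η L T ≤ 1/2` makes this bound at most `R`, so the induction closes.
-/

section NormEstimates

variable {E : Type*} [SeminormedAddCommGroup E]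

theorem norm_smul_add_smul_sub_le [NormedSpace ℝ E] {a b v w : E} {β : ℝ} (hβ0 : 0 ≤ β)
    (hβ1 : β ≤ 1) :
    ‖(β • a + (1 - β) • v) - (β • b + (1 - β) • w)‖ ≤ β * ‖a - b‖ + (1 - β) * ‖v - w‖ := by
  calc ‖(β • a + (1 - β) • v) - (β • b + (1 - β) • w)‖
      = ‖β • (a - b) + (1 - β) • (v - w)‖ := by congr 1; module
    _ ≤ ‖β • (a - b)‖ + ‖(1 - β) • (v - w)‖ := norm_add_le _ _
    _ = β * ‖a - b‖ + (1 - β) * ‖v - w‖ := by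
      rw [norm_smul_of_nonneg hβ0, norm_smul_of_nonneg (sub_nonneg.2 hβ1)]

theorem norm_sub_smul_sub_sub_smul_le [NormedSpace ℝ E] {x y m n : E} {η : ℝ} (hη : 0 ≤ η) :
    ‖(x - η • m) - (y - η • n)‖ ≤ ‖x - y‖ + η * ‖m - n‖ := by
  calc ‖(x - η • m) - (y - η • n)‖ = ‖(x - y) - η • (m - n)‖ := by congr 1; module
    _ ≤ ‖x - y‖ + ‖η • (m - n)‖ := norm_sub_le _ _
    _ = ‖x - y‖ + η * ‖m - n‖ := by rw [norm_smul_of_nonneg hη]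

theorem norm_add_add_sub_le_of_lipschitz {g : E → E} {L : ℝ}
    (hg : ∀ x y, ‖g x - g y‖ ≤ L * ‖x - y‖) (x y d ξ : E) :
    ‖(g x + d + ξ) - g y‖ ≤ L * ‖x - y‖ + (‖d‖ + ‖ξ‖) := by
  calc ‖(g x + d + ξ) - g y‖ = ‖(g x - g y) + d + ξ‖ := by congr 1; abel
    _ ≤ ‖g x - g y‖ + ‖d‖ + ‖ξ‖ := norm_add₃_le
    _ ≤ L * ‖x - y‖ + (‖d‖ + ‖ξ‖) := by linarith [hg x y]

end NormEstimates

section Bootstrap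

variable {u e : ℕ → ℝ} {β η L D B R : ℝ} {T : ℕ}

theorem momentum_envelope_le (hβ0 : 0 ≤ β) (hβ1 : β < 1) (hη : 0 ≤ η) (hB : 0 ≤ B)
    {c : ℝ} (hc : 0 ≤ c) {t : ℕ} (ht : t ≤ T) :
    η * B * (1 - β ^ t) / (1 - β) + η * t * c ≤ η * B / (1 - β) + η * T * c := by
  have htT : (t : ℝ) ≤ T := by exact_mod_cast ht
  have hgeom : η * B * (1 - β ^ t) ≤ η * B := by
    nlinarith [mul_nonneg (mul_nonneg hη hB) (pow_nonneg hβ0 t)]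
  have := div_le_div_of_nonneg_right hgeom (sub_pos.2 hβ1).le
  gcongr

theorem momentum_gaps_le_envelope (hβ0 : 0 ≤ β) (hβ1 : β < 1) (hη : 0 ≤ η) (hL : 0 ≤ L)
    (hB : 0 ≤ B) (hc : 0 ≤ L * R + D)
    (hu : ∀ t, u (t + 1) ≤ β * u t + (1 - β) * (L * e t + D))
    (he : ∀ t, e (t + 1) ≤ e t + η * u (t + 1)) (hu0 : u 0 ≤ B) (he0 : e 0 ≤ 0)
    (hR : η * B / (1 - β) + η * T * (L * R + D) ≤ R) :
    ∀ t ≤ T, u t ≤ β ^ t * B + (L * R + D) ∧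
      e t ≤ η * B * (1 - β ^ t) / (1 - β) + η * t * (L * R + D) := by
  have h1β : 0 < 1 - β := sub_pos.2 hβ1
  intro t
  induction t with
  | zero => intro _; simpa using ⟨by linarith, he0⟩
  | succ t ih =>
    intro ht
    obtain ⟨hut, het⟩ := ih (Nat.le_of_succ_le ht)
    have heR : e t ≤ R :=
      het.trans ((momentum_envelope_le hβ0 hβ1 hη hB hc (Nat.le_of_succ_le ht)).trans hR)
    have hu' : u (t + 1) ≤ β ^ (t + 1) * B + (L * R + D) := by
      have hLe : L * e t ≤ L * R := mul_le_mul_of_nonneg_left heR hL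
      calc u (t + 1) ≤ β * u t + (1 - β) * (L * e t + D) := hu t
        _ ≤ β * (β ^ t * B + (L * R + D)) + (1 - β) * (L * R + D) := by gcongr
        _ = β ^ (t + 1) * B + (L * R + D) := by ring
    refine ⟨hu', ?_⟩
    have hgeom : η * B * (1 - β ^ t) / (1 - β) + η * (β ^ (t + 1) * B) ≤
        η * B * (1 - β ^ (t + 1)) / (1 - β) := by
      rw [div_add' _ _ _ h1β.ne', div_le_div_iff_of_pos_right h1β, pow_succ]
      nlinarith [mul_nonneg (mul_nonneg (mul_nonneg hη hB) (pow_nonneg hβ0 t))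
        (sq_nonneg (1 - β))]
    calc e (t + 1) ≤ e t + η * u (t + 1) := he t
      _ ≤ η * B * (1 - β ^ t) / (1 - β) + η * t * (L * R + D)
          + η * (β ^ (t + 1) * B + (L * R + D)) := by gcongr
      _ ≤ η * B * (1 - β ^ (t + 1)) / (1 - β) + η * ↑(t + 1) * (L * R + D) := by
        push_cast; linarith

theorem gap_le_radius_of_momentum_recursion (hβ0 : 0 ≤ β) (hβ1 : β < 1) (hη : 0 ≤ η)
    (hL : 0 ≤ L) (hB : 0 ≤ B) (hc : 0 ≤ L * R + D)
    (hu : ∀ t, u (t + 1) ≤ β * u t + (1 - β) * (L * e t + D))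
    (he : ∀ t, e (t + 1) ≤ e t + η * u (t + 1)) (hu0 : u 0 ≤ B) (he0 : e 0 ≤ 0)
    (hR : η * B / (1 - β) + η * T * (L * R + D) ≤ R) :
    ∀ t ≤ T, e t ≤ R := fun t ht ↦
  (momentum_gaps_le_envelope hβ0 hβ1 hη hL hB hc hu he hu0 he0 hR t ht).2.trans
    ((momentum_envelope_le hβ0 hβ1 hη hB hc ht).trans hR)

theorem radius_self_consistent (hβ1 : β < 1) (hη : 0 ≤ η) (hB : 0 ≤ B) (hD : 0 ≤ D)
    (hstep : η * L * T ≤ 1 / 2) :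
    η * B / (1 - β) + η * T * (L * (2 * η * B / (1 - β) + 2 * η * T * D) + D) ≤
      2 * η * B / (1 - β) + 2 * η * T * D := by
  have h1β : 0 < 1 - β := sub_pos.2 hβ1
  set R := 2 * η * B / (1 - β) + 2 * η * T * D with hR
  have hR0 : 0 ≤ R := by positivity
  have hhalf : η * T * (L * R) ≤ R / 2 := by nlinarith
  have hsplit : R / 2 = η * B / (1 - β) + η * T * D := by rw [hR]; ring
  linarith

end Bootstrap

theorem momentum_local_containment_general {d : ℕ} (f : EuclideanSpace ℝ (Fin d) → ℝ)
    (L : ℝ) (hL : 0 ≤ L)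
    (hlip : ∀ x y, ‖gradient f x - gradient f y‖ ≤ L * ‖x - y‖)
    (η β Bm G ε : ℝ) (hη : 0 < η) (hβ0 : 0 ≤ β) (hβ1 : β < 1)
    (hBm : 0 ≤ Bm) (hG : 0 ≤ G) (hε : 0 ≤ ε)
    (T : ℕ) (hstep : η * L * T ≤ 1 / 2)
    (θ m θs ms dv ξ : ℕ → EuclideanSpace ℝ (Fin d))
    (hmrec : ∀ t, m (t + 1) = β • m t + (1 - β) • (gradient f (θ t) + dv t + ξ t))
    (hθrec : ∀ t, θ (t + 1) = θ t - η • m (t + 1))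
    (hmsrec : ∀ t, ms (t + 1) = β • ms t + (1 - β) • gradient f (θs t))
    (hθsrec : ∀ t, θs (t + 1) = θs t - η • ms (t + 1))
    (h0 : θ 0 = θs 0) (hm0 : ‖m 0 - ms 0‖ ≤ Bm)
    (hd : ∀ t, ‖dv t‖ ≤ 2 * G) (hxi : ∀ t, ‖ξ t‖ ≤ ε) :
    ∀ t ≤ T, ‖θ t - θs t‖ ≤ 2 * η * Bm / (1 - β) + 2 * η * T * (2 * G + ε) := by
  have hD : 0 ≤ 2 * G + ε := by positivity
  have hc : 0 ≤ L * (2 * η * Bm / (1 - β) + 2 * η * T * (2 * G + ε)) + (2 * G + ε) := by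
    have := sub_pos.2 hβ1; positivity
  have hmom (t : ℕ) : ‖m (t + 1) - ms (t + 1)‖ ≤
      β * ‖m t - ms t‖ + (1 - β) * (L * ‖θ t - θs t‖ + (2 * G + ε)) := by
    rw [hmrec, hmsrec]
    refine (norm_smul_add_smul_sub_le hβ0 hβ1.le).trans ?_
    have := norm_add_add_sub_le_of_lipschitz hlip (θ t) (θs t) (dv t) (ξ t)
    gcongr
    linarith [hd t, hxi t]
  have hpos (t : ℕ) :
      ‖θ (t + 1) - θs (t + 1)‖ ≤ ‖θ t - θs t‖ + η * ‖m (t + 1) - ms (t + 1)‖ := by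
    rw [hθrec, hθsrec]
    exact norm_sub_smul_sub_sub_smul_le hη.le
  exact gap_le_radius_of_momentum_recursion (u := fun t ↦ ‖m t - ms t‖)
    (e := fun t ↦ ‖θ t - θs t‖) hβ0 hβ1 hη.le hL hBm hc hmom hpos hm0 (by simp [h0])
    (radius_self_consistent hβ1 hη.le hBm hD hstep)

/-- Local-containment radius for SGD with momentum under drift, noise,
and initial optimizer-state (first-moment) mismatch. -/
theorem momentum_local_containment {d : ℕ} (f : EuclideanSpace ℝ (Fin d) → ℝ)
    (L : ℝ) (hL : 0 ≤ L) (hf : Differentiable ℝ f)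
    (hlip : ∀ x y, ‖gradient f x - gradient f y‖ ≤ L * ‖x - y‖)
    (η β Bm G ε : ℝ) (hη : 0 < η) (hβ0 : 0 ≤ β) (hβ1 : β < 1)
    (hBm : 0 ≤ Bm) (hG : 0 ≤ G) (hε : 0 ≤ ε)
    (T : ℕ) (hT : 0 < T) (hstep : η * L * T ≤ 1 / 2)
    (θ m θs ms dv ξ : ℕ → EuclideanSpace ℝ (Fin d))
    (hmrec : ∀ t, m (t + 1) = β • m t + (1 - β) • (gradient f (θ t) + dv t + ξ t))
    (hθrec : ∀ t, θ (t + 1) = θ t - η • m (t + 1))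
    (hmsrec : ∀ t, ms (t + 1) = β • ms t + (1 - β) • gradient f (θs t))
    (hθsrec : ∀ t, θs (t + 1) = θs t - η • ms (t + 1))
    (h0 : θ 0 = θs 0) (hm0 : ‖m 0 - ms 0‖ ≤ Bm)
    (hd : ∀ t, ‖dv t‖ ≤ 2 * G) (hxi : ∀ t, ‖ξ t‖ ≤ ε) :
    ∀ t ≤ T, ‖θ t - θs t‖ ≤ 2 * η * Bm / (1 - β) + 2 * η * T * (2 * G + ε) :=
  momentum_local_containment_general f L hL hlip η β Bm G ε hη hβ0 hβ1 hBm hG hε T hstep θ m θs ms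
    dv ξ hmrec hθrec hmsrec hθsrec h0 hm0 hd hxi
end

section
/- Let f : ℝ^d → ℝ be differentiable, let η > 0, ε > 0, G ≥ 0, N ≥ 0, B_m ≥ 0, B_v ≥ 0, β₁ ∈ [0,1), β₂ ∈ [0,1), and let T be a positive integer. Let (θ_t, m_t, v_t) and (θ*_t, m*_t, v*_t) be sequences with θ_t, θ*_t, m_t, m*_t, v_t, v*_t ∈ ℝ^d satisfying the AdamW-style recursions m_{t+1} = β₁·m_t + (1−β₁)·g_t, v_{t+1} = β₂·v_t + (1−β₂)·g_t ⊙ g_t, θ_{t+1} = θ_t − η·m_{t+1} ⊙ (v_{t+1}+ε)^{−1/2}, and m*_{t+1} = β₁·m*_t + (1−β₁)·g*_t, v*_{t+1} = β₂·v*_t + (1−β₂)·g*_t ⊙ g*_t, θ*_{t+1} = θ*_t − η·m*_{t+1} ⊙ (v*_{t+1}+ε)^{−1/2}, where g_t, g*_t ∈ ℝ^d. Assume θ_0 = θ*_0, v_0 ≥ 0 and v*_0 ≥ 0 coordinatewise, ‖m_0 − m*_0‖₂ ≤ B_m, ‖v_0 − v*_0‖₂ ≤ B_v, ‖m*_0‖₂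 ≤ G, and for all t, ‖g_t‖₂ ≤ G + N and ‖g*_t‖₂ ≤ G. Then for every t ≤ T, ‖θ_t − θ*_t‖₂ ≤ η·B_m/((1−β₁)·√ε) + η·G·B_v/(2·(1−β₂)·ε^{3/2}) + (η·T/√ε)·(3G + N). -/
/-- Coordinatewise EMA of squared gradients, i.e. `β₂ • v + (1-β₂) • (g ⊙ g)`. -/
noncomputable def secondMomentStep {d : ℕ} (β₂ : ℝ) (v g : EuclideanSpace ℝ (Fin d)) :
    EuclideanSpace ℝ (Fin d) :=
  WithLp.toLp 2 (fun i => β₂ * v i + (1 - β₂) * (g i * g i))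

/-- Coordinatewise preconditioned direction `m ⊙ (v + ε)^{-1/2}`. -/
noncomputable def preconditioned {d : ℕ} (ε : ℝ) (m v : EuclideanSpace ℝ (Fin d)) :
    EuclideanSpace ℝ (Fin d) :=
  WithLp.toLp 2 (fun i => m i * (1 / Real.sqrt (v i + ε)))

/-!
The bound follows from the triangle inequality alone, without comparing the two
preconditioners: a nonnegative second moment makes `m ↦ m ⊙ (v + ε)^{-1/2}` shrink
norms by a factor of at least `√ε`, so each step moves the two trajectories apart by
at most `η (‖m_{t+1}‖ + ‖m*_{t+1}‖) / √ε`. The first moments are exponential moving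
averages of bounded gradients, so `‖m*_t‖ ≤ G` and `‖m_t‖ ≤ β₁^t B_m + G + N`; summing,
the `β₁^t B_m` terms add up to at most `B_m / (1 - β₁)` and the rest to `t (2G + N)`.
-/

open Finset

section MovingAverage

variable {E : Type*} [SeminormedAddCommGroup E] [NormedSpace ℝ E]

theorem norm_ema_le {β B C : ℝ} (hβ0 : 0 ≤ β) (hβ1 : β ≤ 1) {x y : ℕ → E}
    (hx : ∀ t, x (t + 1) = β • x t + (1 - β) • y t) (hx0 : ‖x 0‖ ≤ B + C)
    (hy : ∀ t, ‖y t‖ ≤ C) (t : ℕ) :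
    ‖x t‖ ≤ β ^ t * B + C := by
  induction t with
  | zero => simpa using hx0
  | succ t ih =>
    have hβ1' : 0 ≤ 1 - β := by linarith
    calc ‖x (t + 1)‖ ≤ β * ‖x t‖ + (1 - β) * ‖y t‖ := by
          rw [hx t]
          refine (norm_add_le _ _).trans_eq ?_
          rw [norm_smul, norm_smul, Real.norm_of_nonneg hβ0, Real.norm_of_nonneg hβ1']
      _ ≤ β * (β ^ t * B + C) + (1 - β) * C := by
          gcongr
          exact hy t
      _ = β ^ (t + 1) * B + C := by ring

theorem norm_sub_le_sum_of_update {η : ℝ} (hη : 0 ≤ η) {θ θ' p p' : ℕ → E}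
    (hθ : ∀ t, θ (t + 1) = θ t - η • p t) (hθ' : ∀ t, θ' (t + 1) = θ' t - η • p' t)
    (h0 : θ 0 = θ' 0) (t : ℕ) :
    ‖θ t - θ' t‖ ≤ η * ∑ s ∈ range t, (‖p s‖ + ‖p' s‖) := by
  induction t with
  | zero => simp [h0]
  | succ t ih =>
    have hstep : θ (t + 1) - θ' (t + 1) = (θ t - θ' t) - η • (p t - p' t) := by
      rw [hθ, hθ', smul_sub]
      abel
    calc ‖θ (t + 1) - θ' (t + 1)‖ ≤ ‖θ t - θ' t‖ + η * (‖p t‖ + ‖p' t‖) := by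
          rw [hstep]
          refine (norm_sub_le _ _).trans ?_
          rw [norm_smul, Real.norm_of_nonneg hη]
          gcongr
          exact norm_sub_le _ _
      _ ≤ η * ∑ s ∈ range (t + 1), (‖p s‖ + ‖p' s‖) := by
          rw [sum_range_succ]
          linarith

end MovingAverage

theorem sum_range_mul_pow_succ_add_le {β B : ℝ} (hβ0 : 0 ≤ β) (hβ1 : β < 1) (hB : 0 ≤ B)
    (c : ℝ) (t : ℕ) :
    ∑ s ∈ range t, (B * β ^ (s + 1) + c) ≤ B / (1 - β) + t * c := by
  have hgeom : ∑ s ∈ range t, β ^ (s + 1) ≤ 1 / (1 - β) :=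
    calc ∑ s ∈ range t, β ^ (s + 1) ≤ ∑ s ∈ range t, β ^ s :=
          sum_le_sum fun s _ => pow_le_pow_of_le_one hβ0 hβ1.le s.le_succ
      _ ≤ 1 / (1 - β) := by
          have := geom_sum_Ico_le_of_lt_one (m := 0) (n := t) hβ0 hβ1
          rwa [← range_eq_Ico, pow_zero] at this
  rw [sum_add_distrib, ← mul_sum, sum_const, card_range, nsmul_eq_mul, ← mul_one_div B]
  gcongr

section Preconditioner

variable {d : ℕ}

theorem secondMomentStep_nonneg {β₂ : ℝ} (hβ₂0 : 0 ≤ β₂) (hβ₂1 : β₂ ≤ 1)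
    {v : EuclideanSpace ℝ (Fin d)} (hv : ∀ i, 0 ≤ v i) (g : EuclideanSpace ℝ (Fin d))
    (i : Fin d) : 0 ≤ secondMomentStep β₂ v g i := by
  have := mul_self_nonneg (g i)
  simp only [secondMomentStep, PiLp.toLp_apply]
  have := hv i
  have : 0 ≤ 1 - β₂ := by linarith
  positivity

theorem secondMoment_nonneg {β₂ : ℝ} (hβ₂0 : 0 ≤ β₂) (hβ₂1 : β₂ ≤ 1)
    {v g : ℕ → EuclideanSpace ℝ (Fin d)}
    (hv : ∀ t, v (t + 1) = secondMomentStep β₂ (v t) (g t))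
    (hv0 : ∀ i, 0 ≤ v 0 i) (t : ℕ) (i : Fin d) : 0 ≤ v t i := by
  induction t generalizing i with
  | zero => exact hv0 i
  | succ t ih => exact hv t ▸ secondMomentStep_nonneg hβ₂0 hβ₂1 ih (g t) i

theorem norm_preconditioned_le {ε : ℝ} (hε : 0 < ε) (m : EuclideanSpace ℝ (Fin d))
    {w : EuclideanSpace ℝ (Fin d)} (hw : ∀ i, 0 ≤ w i) :
    ‖preconditioned ε m w‖ ≤ ‖m‖ / Real.sqrt ε := by
  rw [EuclideanSpace.norm_eq, EuclideanSpace.norm_eq, ← Real.sqrt_div' _ hε.le, sum_div]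
  gcongr with i
  have hwε : 0 < w i + ε := by linarith [hw i]
  calc ‖preconditioned ε m w i‖ ^ 2 = ‖m i‖ ^ 2 / (w i + ε) := by
        simp only [preconditioned, PiLp.toLp_apply, norm_div,
          Real.norm_of_nonneg (Real.sqrt_nonneg _), div_pow, Real.sq_sqrt hwε.le, mul_one_div]
    _ ≤ ‖m i‖ ^ 2 / ε := by gcongr; linarith [hw i]

end Preconditioner

theorem adamw_trajectory_deviation_general {d : ℕ}
    (η ε G N Bm Bv β₁ β₂ : ℝ)
    (hη : 0 < η) (hε : 0 < ε) (hG : 0 ≤ G) (hN : 0 ≤ N)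
    (hBm : 0 ≤ Bm) (hBv : 0 ≤ Bv)
    (hβ₁0 : 0 ≤ β₁) (hβ₁1 : β₁ < 1) (hβ₂0 : 0 ≤ β₂) (hβ₂1 : β₂ < 1)
    (T : ℕ)
    (θ m v θs ms vs g gs : ℕ → EuclideanSpace ℝ (Fin d))
    (hm : ∀ t, m (t + 1) = β₁ • m t + (1 - β₁) • g t)
    (hv : ∀ t, v (t + 1) = secondMomentStep β₂ (v t) (g t))
    (hθ : ∀ t, θ (t + 1) = θ t - η • preconditioned ε (m (t + 1)) (v (t + 1)))
    (hms : ∀ t, ms (t + 1) = β₁ • ms t + (1 - β₁) • gs t)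
    (hvs : ∀ t, vs (t + 1) = secondMomentStep β₂ (vs t) (gs t))
    (hθs : ∀ t, θs (t + 1) = θs t - η • preconditioned ε (ms (t + 1)) (vs (t + 1)))
    (h0 : θ 0 = θs 0)
    (hv0 : ∀ i, 0 ≤ v 0 i) (hvs0 : ∀ i, 0 ≤ vs 0 i)
    (hm0 : ‖m 0 - ms 0‖ ≤ Bm) (hms0 : ‖ms 0‖ ≤ G)
    (hg : ∀ t, ‖g t‖ ≤ G + N) (hgs : ∀ t, ‖gs t‖ ≤ G) :
    ∀ t ≤ T, ‖θ t - θs t‖ ≤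
      η * Bm / ((1 - β₁) * Real.sqrt ε)
        + η * G * Bv / (2 * (1 - β₂) * ε ^ ((3 : ℝ) / 2))
        + (η * T / Real.sqrt ε) * (3 * G + N) := by
  intro t ht
  have hms_le (s : ℕ) : ‖ms s‖ ≤ G := by
    simpa using norm_ema_le hβ₁0 hβ₁1.le hms (B := 0) (by simpa using hms0) hgs s
  have hm_le (s : ℕ) : ‖m s‖ ≤ β₁ ^ s * Bm + (G + N) :=
    norm_ema_le hβ₁0 hβ₁1.le hm (by linarith [norm_le_norm_add_norm_sub' (m 0) (ms 0)]) hg s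
  have hstep (s : ℕ) :
      ‖preconditioned ε (m (s + 1)) (v (s + 1))‖ + ‖preconditioned ε (ms (s + 1)) (vs (s + 1))‖
        ≤ (Bm * β₁ ^ (s + 1) + (2 * G + N)) / Real.sqrt ε := by
    calc _ ≤ ‖m (s + 1)‖ / Real.sqrt ε + ‖ms (s + 1)‖ / Real.sqrt ε := add_le_add
          (norm_preconditioned_le hε _ (secondMoment_nonneg hβ₂0 hβ₂1.le hv hv0 (s + 1)))
          (norm_preconditioned_le hε _ (secondMoment_nonneg hβ₂0 hβ₂1.le hvs hvs0 (s + 1)))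
      _ ≤ (Bm * β₁ ^ (s + 1) + (2 * G + N)) / Real.sqrt ε := by
          rw [← add_div]
          gcongr ?_ / _
          linarith [hm_le (s + 1), hms_le (s + 1)]
  have hdrift : ‖θ t - θs t‖ ≤ η * Bm / ((1 - β₁) * Real.sqrt ε)
      + (η * T / Real.sqrt ε) * (3 * G + N) :=
    calc ‖θ t - θs t‖
        ≤ η * ∑ s ∈ range t, (Bm * β₁ ^ (s + 1) + (2 * G + N)) / Real.sqrt ε :=
          (norm_sub_le_sum_of_update hη.le hθ hθs h0 t).trans
            (by gcongr with s; exact hstep s)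
      _ ≤ η * (Bm / (1 - β₁) + T * (3 * G + N)) / Real.sqrt ε := by
          rw [← sum_div, mul_div_assoc]
          gcongr η * (?_ / _)
          refine (sum_range_mul_pow_succ_add_le hβ₁0 hβ₁1 hBm _ t).trans ?_
          gcongr
          norm_num
      _ = η * Bm / ((1 - β₁) * Real.sqrt ε) + (η * T / Real.sqrt ε) * (3 * G + N) := by
          field_simp
  have hpreconditioner_mismatch : 0 ≤ η * G * Bv / (2 * (1 - β₂) * ε ^ ((3 : ℝ) / 2)) := by
    have : 0 < 1 - β₂ := by linarith
    positivity
  linarith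

/-- Trajectory deviation bound for AdamW-style updates under
gradient bounds and initial optimizer-state mismatches. -/
theorem adamw_trajectory_deviation {d : ℕ} (f : EuclideanSpace ℝ (Fin d) → ℝ)
    (hf : Differentiable ℝ f)
    (η ε G N Bm Bv β₁ β₂ : ℝ)
    (hη : 0 < η) (hε : 0 < ε) (hG : 0 ≤ G) (hN : 0 ≤ N)
    (hBm : 0 ≤ Bm) (hBv : 0 ≤ Bv)
    (hβ₁0 : 0 ≤ β₁) (hβ₁1 : β₁ < 1) (hβ₂0 : 0 ≤ β₂) (hβ₂1 : β₂ < 1)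
    (T : ℕ) (hT : 0 < T)
    (θ m v θs ms vs g gs : ℕ → EuclideanSpace ℝ (Fin d))
    (hm : ∀ t, m (t + 1) = β₁ • m t + (1 - β₁) • g t)
    (hv : ∀ t, v (t + 1) = secondMomentStep β₂ (v t) (g t))
    (hθ : ∀ t, θ (t + 1) = θ t - η • preconditioned ε (m (t + 1)) (v (t + 1)))
    (hms : ∀ t, ms (t + 1) = β₁ • ms t + (1 - β₁) • gs t)
    (hvs : ∀ t, vs (t + 1) = secondMomentStep β₂ (vs t) (gs t))
    (hθs : ∀ t, θs (t + 1) = θs t - η • preconditioned ε (ms (t + 1)) (vs (t + 1)))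
    (h0 : θ 0 = θs 0)
    (hv0 : ∀ i, 0 ≤ v 0 i) (hvs0 : ∀ i, 0 ≤ vs 0 i)
    (hm0 : ‖m 0 - ms 0‖ ≤ Bm) (hv0d : ‖v 0 - vs 0‖ ≤ Bv) (hms0 : ‖ms 0‖ ≤ G)
    (hg : ∀ t, ‖g t‖ ≤ G + N) (hgs : ∀ t, ‖gs t‖ ≤ G) :
    ∀ t ≤ T, ‖θ t - θs t‖ ≤
      η * Bm / ((1 - β₁) * Real.sqrt ε)
        + η * G * Bv / (2 * (1 - β₂) * ε ^ ((3 : ℝ) / 2))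
        + (η * T / Real.sqrt ε) * (3 * G + N) :=
  adamw_trajectory_deviation_general η ε G N Bm Bv β₁ β₂ hη hε hG hN hBm hBv hβ₁0 hβ₁1 hβ₂0 hβ₂1 T θ
    m v θs ms vs g gs hm hv hθ hms hvs hθs h0 hv0 hvs0 hm0 hms0 hg hgs
end
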